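/- arXiv:1703.01924 — 2 statements merged into one kernel-verified Lean document; each statement's English description precedes it below -/
import Mathlib

section
/- Finite Representation Theorem for sets of desirable gambles: a set of desirable gambles D ⊆ L(X^N) is exchangeable if and only if there exists a (necessarily unique) set D̃ ⊆ L(C_N) such that D = {f ∈ L(X^N) : Hy_N(f) ∈ D̃}. In that case D̃ = Hy_N(D), and D is coherent if and only if D̃ is coherent. -/
/-!
`Hy_N` is a linear surjection `L(X^N) → L(C_N)` (with positive section `g ↦ g ∘ T`) whose
kernel is exactly `I_N`. It kills every `f - σ^t f` because each atom `A_m` is permutation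
invariant; conversely `f` differs from its symmetrization by an element of `I_N`, and a
symmetric gamble is constant on every atom, so it is read off from its `Hy_N` and vanishes
when `Hy_N f = 0`. For any linear surjection `φ`, a set is stable under adding `ker φ` iff it is a
preimage `φ⁻¹ D̃`, and then `D̃ = φ D`. Coherence passes both ways because `Hy_N` maps nonzero
nonnegative gambles to nonzero nonnegative ones and nonnegative gambles on `C_N` have
nonnegative preimages.
-/

namespace ExchPaper

/-- The lift of a permutation `σ` of `{1,…,N}` to gambles on `X^N`: `(σ^t f)(x) = f(σx)`. -/
def lift {X : Type*} (N : ℕ) (σ : Equiv.Perm (Fin N)) (f : (Fin N → X) → ℝ) :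
    (Fin N → X) → ℝ :=
  fun x => f (fun k => x (σ k))
/-- `I_N`: the linear span of `{f − σ^t f : f ∈ L(X^N), σ a permutation of {1,…,N}}`. -/
def IN (X : Type*) (N : ℕ) : Submodule ℝ ((Fin N → X) → ℝ) :=
  Submodule.span ℝ
    {g | ∃ (f : (Fin N → X) → ℝ) (σ : Equiv.Perm (Fin N)), g = f - lift N σ f}
/-- The count vector `T(x)` of a sequence `x ∈ X^N`: `T(x)_z = #{k : x_k = z}`. -/
def countVec {X : Type*} [Fintype X] [DecidableEq X] (N : ℕ) (x : Fin N → X) : X → ℕ :=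
  fun z => (Finset.univ.filter (fun k => x k = z)).card

/-- The set of count vectors `C_N = {m ∈ ℕ^X : Σ_z m_z = N}`. -/
def CNset (X : Type*) [Fintype X] (N : ℕ) : Set (X → ℕ) :=
  {m | ∑ z, m z = N}

lemma CNset_finite (X : Type*) [Fintype X] (N : ℕ) : (CNset X N).Finite := by
  apply Set.Finite.subset (Set.Finite.pi (fun _ : X => Set.finite_Iic N))
  intro m hm
  simp only [Set.mem_pi, Set.mem_univ, Set.mem_Iic, forall_true_left]
  intro z
  calc m z ≤ ∑ w, m w := Finset.single_le_sum (fun i _ => Nat.zero_le (m i)) (Finset.mem_univ z)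
  _ = N := hm

noncomputable instance (X : Type*) [Fintype X] (N : ℕ) : Fintype (CNset X N) :=
  (CNset_finite X N).fintype

/-- The permutation invariant atom `A_m = {x ∈ X^N : T(x) = m}`. -/
def atom {X : Type*} [Fintype X] [DecidableEq X] (N : ℕ) (m : X → ℕ) : Finset (Fin N → X) :=
  Finset.univ.filter (fun x => countVec N x = m)

/-- `Hy_N(f)(m) = (1/|A_m|) Σ_{y ∈ A_m} f(y)`. -/
noncomputable def Hy {X : Type*} [Fintype X] [DecidableEq X] (N : ℕ)
    (f : (Fin N → X) → ℝ) (m : X → ℕ) : ℝ :=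
  (1 / ((atom N m).card : ℝ)) * ∑ y ∈ atom N m, f y

/-- `Hy_N(f)` as a gamble on `C_N`. -/
noncomputable def HyFun {X : Type*} [Fintype X] [DecidableEq X] (N : ℕ)
    (f : (Fin N → X) → ℝ) : CNset X N → ℝ :=
  fun m => Hy N f m.1
/-- Coherence of a set of desirable gambles `D` on a possibility space `α`: `0 ∉ D`; every
nonzero nonnegative gamble belongs to `D`; `D` is closed under multiplication by positive
reals and under addition. -/
def CohDes {α : Type*} (D : Set (α → ℝ)) : Prop :=
  (0 : α → ℝ) ∉ D ∧
  (∀ f : α → ℝ, (∀ x, 0 ≤ f x) → f ≠ 0 → f ∈ D) ∧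
  (∀ f ∈ D, ∀ l : ℝ, 0 < l → l • f ∈ D) ∧
  (∀ f ∈ D, ∀ g ∈ D, f + g ∈ D)

section Representation

variable {V W : Type*} [AddCommGroup V] [Module ℝ V] [AddCommGroup W] [Module ℝ W]

lemma forall_add_mem_ker_iff_exists_eq_preimage (φ : V →ₗ[ℝ] W) (D : Set V) :
    (∀ f ∈ D, ∀ h ∈ LinearMap.ker φ, f + h ∈ D) ↔ ∃ Dt : Set W, D = φ ⁻¹' Dt := by
  constructor
  · intro hD
    refine ⟨φ '' D, Set.Subset.antisymm (Set.subset_preimage_image φ D) ?_⟩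
    rintro f ⟨g, hg, hgf⟩
    simpa using hD g hg (f - g) (by simp [hgf])
  · rintro ⟨Dt, rfl⟩ f hf h hh
    simpa [Set.mem_preimage, LinearMap.mem_ker.mp hh] using hf

end Representation

section Coherence

variable {α β : Type*} (φ : (α → ℝ) →ₗ[ℝ] (β → ℝ)) {Dt : Set (β → ℝ)}

lemma cohDes_preimage (hφ : ∀ f, 0 ≤ f → f ≠ 0 → 0 ≤ φ f ∧ φ f ≠ 0) (hDt : CohDes Dt) :
    CohDes (φ ⁻¹' Dt) := by
  obtain ⟨h0, hpos, hsmul, hadd⟩ := hDt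
  refine ⟨by simpa using h0, fun f hf hf0 => ?_, fun f hf l hl => ?_, fun f hf g hg => ?_⟩
  · exact hpos _ (hφ f hf hf0).1 (hφ f hf hf0).2
  · simpa using hsmul _ hf l hl
  · simpa using hadd _ hf _ hg

lemma cohDes_of_cohDes_preimage (hsurj : Function.Surjective φ)
    (hlift : ∀ g, 0 ≤ g → ∃ f, 0 ≤ f ∧ φ f = g) (hD : CohDes (φ ⁻¹' Dt)) : CohDes Dt := by
  obtain ⟨h0, hpos, hsmul, hadd⟩ := hD
  refine ⟨by simpa using h0, fun g hg hg0 => ?_, fun g hg l hl => ?_, fun g hg g' hg' => ?_⟩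
  · obtain ⟨f, hf, rfl⟩ := hlift g hg
    exact hpos f hf (by rintro rfl; exact hg0 (map_zero φ))
  · obtain ⟨f, rfl⟩ := hsurj g
    simpa using hsmul f hg l hl
  · obtain ⟨f, rfl⟩ := hsurj g
    obtain ⟨f', rfl⟩ := hsurj g'
    simpa using hadd f hg f' hg'

end Coherence

section CountVectors

variable {X : Type*} [Fintype X] [DecidableEq X] {N : ℕ}

lemma mem_atom {x : Fin N → X} {m : X → ℕ} : x ∈ atom N m ↔ countVec N x = m := by
  simp [atom]

lemma countVec_mem_CNset (x : Fin N → X) : countVec N x ∈ CNset X N := by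
  simpa [CNset, countVec] using (Finset.card_eq_sum_card_fiberwise
    (f := x) (s := Finset.univ) (t := Finset.univ) fun a _ => Finset.mem_univ _).symm

lemma countVec_comp_perm (x : Fin N → X) (σ : Equiv.Perm (Fin N)) :
    countVec N (fun k => x (σ k)) = countVec N x := by
  funext z
  simp only [countVec, Finset.card_filter]
  exact Fintype.sum_equiv σ _ _ fun k => rfl

lemma exists_perm_of_countVec_eq {x y : Fin N → X} (h : countVec N x = countVec N y) :
    ∃ σ : Equiv.Perm (Fin N), y = fun k => x (σ k) := by
  have hfib : ∀ z, Fintype.card {k // y k = z} = Fintype.card {k // x k = z} := by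
    intro z
    simpa [Fintype.card_subtype, countVec] using (congrFun h z).symm
  exact ⟨Equiv.ofFiberEquiv fun z => Fintype.equivOfCardEq (hfib z),
    funext fun k => (Equiv.ofFiberEquiv_map _ k).symm⟩

lemma exists_countVec_eq {m : X → ℕ} (hm : m ∈ CNset X N) :
    ∃ x : Fin N → X, countVec N x = m := by
  have hcard : Fintype.card (Σ z, Fin (m z)) = N := by
    simp only [Fintype.card_sigma, Fintype.card_fin]; exact hm
  -- `x` enumerates `Σ z, Fin (m z)`, so it takes each value `z` exactly `m z` times.
  let e : Fin N ≃ Σ z, Fin (m z) := (Fintype.equivFinOfCardEq hcard).symm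
  refine ⟨fun k => (e k).1, funext fun z => ?_⟩
  simp only [countVec, Finset.card_filter]
  rw [Fintype.sum_equiv e _ (fun p : Σ z, Fin (m z) => if p.1 = z then 1 else 0) fun k => rfl,
    Fintype.sum_sigma]
  simp [apply_ite]

end CountVectors

section Symmetrization

variable {X : Type*} {N : ℕ}

noncomputable def symmetrize (N : ℕ) (f : (Fin N → X) → ℝ) : (Fin N → X) → ℝ :=
  (N.factorial : ℝ)⁻¹ • ∑ σ : Equiv.Perm (Fin N), lift N σ f

lemma lift_symmetrize (σ : Equiv.Perm (Fin N)) (f : (Fin N → X) → ℝ) :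
    lift N σ (symmetrize N f) = symmetrize N f := by
  funext x
  simp only [symmetrize, lift, Pi.smul_apply, Finset.sum_apply, smul_eq_mul]
  congr 1
  exact Fintype.sum_equiv (Equiv.mulLeft σ) _ _ fun τ => rfl

lemma sub_symmetrize_mem_IN (f : (Fin N → X) → ℝ) : f - symmetrize N f ∈ IN X N := by
  have hfact : (N.factorial : ℝ) ≠ 0 := by positivity
  have key : f - symmetrize N f
      = (N.factorial : ℝ)⁻¹ • ∑ σ : Equiv.Perm (Fin N), (f - lift N σ f) := by
    rw [Finset.sum_sub_distrib, Finset.sum_const, Finset.card_univ, Fintype.card_perm,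
      Fintype.card_fin, smul_sub, ← Nat.cast_smul_eq_nsmul ℝ, smul_smul,
      inv_mul_cancel₀ hfact, one_smul, symmetrize]
  rw [key]
  exact Submodule.smul_mem _ _ (Submodule.sum_mem _ fun σ _ => Submodule.subset_span ⟨f, σ, rfl⟩)

end Symmetrization

section Hypergeometric

variable {X : Type*} [Fintype X] [DecidableEq X] {N : ℕ}

noncomputable def hyLinearMap (X : Type*) [Fintype X] [DecidableEq X] (N : ℕ) :
    ((Fin N → X) → ℝ) →ₗ[ℝ] (CNset X N → ℝ) where
  toFun := HyFun N
  map_add' f g := by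
    funext m
    simp [HyFun, Hy, Finset.sum_add_distrib, mul_add]
  map_smul' c f := by
    funext m
    simp only [HyFun, Hy, Pi.smul_apply, smul_eq_mul, RingHom.id_apply, ← Finset.mul_sum]
    ring

@[simp]
lemma coe_hyLinearMap : ⇑(hyLinearMap X N) = HyFun N := rfl

lemma Hy_lift (f : (Fin N → X) → ℝ) (σ : Equiv.Perm (Fin N)) (m : X → ℕ) :
    Hy N (lift N σ f) m = Hy N f m := by
  unfold Hy lift
  congr 1
  refine Finset.sum_equiv (Equiv.arrowCongr σ.symm (Equiv.refl X)) (fun y => ?_) fun _ _ => rfl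
  rw [mem_atom, mem_atom, ← countVec_comp_perm y σ]
  rfl

lemma IN_le_ker_hyLinearMap : IN X N ≤ LinearMap.ker (hyLinearMap X N) := by
  rw [IN, Submodule.span_le]
  rintro _ ⟨f, σ, rfl⟩
  rw [SetLike.mem_coe, LinearMap.mem_ker, map_sub, coe_hyLinearMap, sub_eq_zero]
  funext m
  exact (Hy_lift f σ m).symm

lemma Hy_countVec_of_lift_eq {g : (Fin N → X) → ℝ} (hg : ∀ σ, lift N σ g = g)
    (x : Fin N → X) : Hy N g (countVec N x) = g x := by
  have hconst : ∀ y ∈ atom N (countVec N x), g y = g x := by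
    intro y hy
    obtain ⟨σ, rfl⟩ := exists_perm_of_countVec_eq (mem_atom.mp hy).symm
    exact congrFun (hg σ) x
  have hcard : (atom N (countVec N x)).card ≠ 0 :=
    (Finset.card_pos.mpr ⟨x, mem_atom.mpr rfl⟩).ne'
  rw [Hy, Finset.sum_congr rfl hconst, Finset.sum_const, nsmul_eq_mul]
  field_simp

lemma ker_hyLinearMap_le_IN : LinearMap.ker (hyLinearMap X N) ≤ IN X N := by
  intro f hf
  have hsub := sub_symmetrize_mem_IN f
  have hsym : HyFun N (symmetrize N f) = 0 := by
    have := LinearMap.mem_ker.mp (IN_le_ker_hyLinearMap hsub)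
    rwa [map_sub, LinearMap.mem_ker.mp hf, zero_sub, neg_eq_zero] at this
  have hzero : symmetrize N f = 0 := by
    funext x
    rw [← Hy_countVec_of_lift_eq (fun σ => lift_symmetrize σ f) x]
    exact congrFun hsym ⟨countVec N x, countVec_mem_CNset x⟩
  simpa [hzero] using hsub

lemma ker_hyLinearMap : LinearMap.ker (hyLinearMap X N) = IN X N :=
  le_antisymm ker_hyLinearMap_le_IN IN_le_ker_hyLinearMap

def compCountVec (g : CNset X N → ℝ) : (Fin N → X) → ℝ :=
  fun x => g ⟨countVec N x, countVec_mem_CNset x⟩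

lemma HyFun_compCountVec (g : CNset X N → ℝ) : HyFun N (compCountVec g) = g := by
  funext ⟨m, hm⟩
  obtain ⟨x, rfl⟩ := exists_countVec_eq hm
  refine Hy_countVec_of_lift_eq (fun σ => funext fun y => ?_) x
  simp [compCountVec, lift, countVec_comp_perm]

lemma HyFun_nonneg {f : (Fin N → X) → ℝ} (hf : 0 ≤ f) : 0 ≤ HyFun N f :=
  fun _ => mul_nonneg (by positivity) (Finset.sum_nonneg fun y _ => hf y)

lemma HyFun_ne_zero {f : (Fin N → X) → ℝ} (hf : 0 ≤ f) (hne : f ≠ 0) : HyFun N f ≠ 0 := by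
  obtain ⟨x, hx⟩ := Function.ne_iff.mp hne
  have hmem : x ∈ atom N (countVec N x) := mem_atom.mpr rfl
  have hpos : 0 < Hy N f (countVec N x) :=
    mul_pos (by simpa using Finset.card_pos.mpr ⟨x, hmem⟩)
      ((lt_of_le_of_ne (hf x) (Ne.symm hx)).trans_le
        (Finset.single_le_sum (fun y _ => hf y) hmem))
  exact fun h => hpos.ne' (congrFun h ⟨countVec N x, countVec_mem_CNset x⟩)

end Hypergeometric

theorem statement_10_general (X : Type*) [Fintype X] [DecidableEq X] (N : ℕ)
    (D : Set ((Fin N → X) → ℝ)) :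
    ((∀ f ∈ D, ∀ h ∈ IN X N, f + h ∈ D) ↔
      ∃ Dt : Set (CNset X N → ℝ), D = {f | HyFun N f ∈ Dt}) ∧
    (∀ Dt Dt' : Set (CNset X N → ℝ),
        D = {f | HyFun N f ∈ Dt} → D = {f | HyFun N f ∈ Dt'} → Dt = Dt') ∧
    (∀ Dt : Set (CNset X N → ℝ), D = {f | HyFun N f ∈ Dt} →
        Dt = HyFun N '' D ∧ (CohDes D ↔ CohDes Dt)) := by
  have hsurj : Function.Surjective (HyFun (X := X) N) :=
    fun g => ⟨compCountVec g, HyFun_compCountVec g⟩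
  have himage : ∀ Dt, D = {f | HyFun N f ∈ Dt} → Dt = HyFun N '' D := by
    rintro Dt rfl
    exact (Set.image_preimage_eq Dt hsurj).symm
  refine ⟨?_, fun Dt Dt' hD hD' => (himage Dt hD).trans (himage Dt' hD').symm,
    fun Dt hD => ⟨himage Dt hD, ?_⟩⟩
  · rw [← ker_hyLinearMap]
    exact forall_add_mem_ker_iff_exists_eq_preimage (hyLinearMap X N) D
  · subst hD
    exact ⟨cohDes_of_cohDes_preimage (hyLinearMap X N) hsurj
        (fun g hg => ⟨compCountVec g, fun x => hg _, HyFun_compCountVec g⟩),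
      cohDes_preimage (hyLinearMap X N) fun f hf hf0 => ⟨HyFun_nonneg hf, HyFun_ne_zero hf hf0⟩⟩

/-- Finite Representation, sets of desirable gambles: a set of desirable
gambles `D ⊆ L(X^N)` is exchangeable (i.e. `D + I_N ⊆ D`) iff there is a (necessarily
unique) set `D̃ ⊆ L(C_N)` with `D = {f : Hy_N(f) ∈ D̃}`; in that case `D̃ = Hy_N(D)`,
and `D` is coherent iff `D̃` is coherent. -/
theorem statement_10 (X : Type*) [Fintype X] [DecidableEq X] [Nonempty X] (N : ℕ) (hN : 0 < N)
    (D : Set ((Fin N → X) → ℝ)) :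
    ((∀ f ∈ D, ∀ h ∈ IN X N, f + h ∈ D) ↔
      ∃ Dt : Set (CNset X N → ℝ), D = {f | HyFun N f ∈ Dt}) ∧
    (∀ Dt Dt' : Set (CNset X N → ℝ),
        D = {f | HyFun N f ∈ Dt} → D = {f | HyFun N f ∈ Dt'} → Dt = Dt') ∧
    (∀ Dt : Set (CNset X N → ℝ), D = {f | HyFun N f ∈ Dt} →
        Dt = HyFun N '' D ∧ (CohDes D ↔ CohDes Dt)) :=
  statement_10_general X N D

end ExchPaper
end

section
/- A coherent choice function C on L_fin is exchangeable (compatible with I_P := ⋃_n I_n) if and only if for every n ∈ ℕ its X^n-marginal C_n is exchangeable (compatible with I_n). Similarly, a coherent set of desirable gambles D ⊆ L_fin satisfies D + I_P ⊆ D if and only if for every n ∈ ℕ its marginal D_n := D ∩ L(X^n) satisfies D_n + I_n ⊆ D_n. -/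
namespace ExchPaper

/-- `f` depends only upon the first `n` variables of the sequence. -/
def DependsOn {X : Type*} (n : ℕ) (f : (ℕ → X) → ℝ) : Prop :=
  ∀ x y : ℕ → X, (∀ k < n, x k = y k) → f x = f y

/-- `L(X^n)`, identified (via cylindrical extension) with the subspace of gambles on `X^ℕ`
that depend only upon the first `n` variables. -/
def Ln (X : Type*) (n : ℕ) : Set ((ℕ → X) → ℝ) := {f | DependsOn n f}

/-- `L_fin`: the linear space of all gambles of finite structure on `X^ℕ`. -/
def Lfin (X : Type*) : Set ((ℕ → X) → ℝ) := {f | ∃ n, DependsOn n f}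
/-- The lift to gambles on `X^ℕ` of a permutation `σ` of `{1,…,n}` (acting on the first `n`
coordinates of a sequence): `(σ^t f)(x) = f(σx)` where `(σx)_k = x_{σ(k)}` for `k < n` and
`(σx)_k = x_k` otherwise. -/
def liftSeq {X : Type*} (n : ℕ) (σ : Equiv.Perm (Fin n)) (f : (ℕ → X) → ℝ) :
    (ℕ → X) → ℝ :=
  fun x => f (fun k => if h : k < n then x (σ ⟨k, h⟩) else x k)

/-- `I_n`: the linear span of `{f − σ^t f : f ∈ L(X^n), σ a permutation of {1,…,n}}`,
viewed inside `L_fin` via cylindrical extension. -/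
def InSub (X : Type*) (n : ℕ) : Submodule ℝ ((ℕ → X) → ℝ) :=
  Submodule.span ℝ
    {g | ∃ f : (ℕ → X) → ℝ, DependsOn n f ∧
      ∃ σ : Equiv.Perm (Fin n), g = f - liftSeq n σ f}

/-- `I_P = ⋃_{n ∈ ℕ} I_n`. -/
def IP (X : Type*) : Set ((ℕ → X) → ℝ) := ⋃ n : ℕ, (InSub X n : Set ((ℕ → X) → ℝ))
/-- The strict pointwise vector ordering on gambles: `f ⋖ g` iff `f ≤ g` pointwise and
`f ≠ g`. -/
def ltPt {α : Type*} (f g : α → ℝ) : Prop := (∀ x, f x ≤ g x) ∧ f ≠ g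

/-- Coherence of a choice function `C` whose option sets are the nonempty finite subsets of
the carrier `V` of an ordered vector space, with strict ordering `lt`; axioms C1, C2, C3a,
C3b, C4a, C4b. -/
def CoherentCF {W : Type*} [AddCommGroup W] [Module ℝ W] (V : Set W)
    (lt : W → W → Prop) (C : Set W → Set W) : Prop :=
  -- C1
  (∀ O : Set W, O.Finite → O.Nonempty → O ⊆ V → (C O).Nonempty) ∧
  -- C2
  (∀ u v : W, u ∈ V → v ∈ V → lt u v → C {u, v} = {v}) ∧
  -- C3a
  (∀ O O1 O2 : Set W, O.Finite → O.Nonempty → O ⊆ V →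
      O1.Finite → O1.Nonempty → O1 ⊆ V → O2.Finite → O2.Nonempty → O2 ⊆ V →
      C O2 ⊆ O2 \ O1 → O1 ⊆ O2 → O2 ⊆ O → C O ⊆ O \ O1) ∧
  -- C3b
  (∀ O O1 O2 : Set W, O.Finite → O.Nonempty → O ⊆ V →
      O1.Finite → O1.Nonempty → O1 ⊆ V → O2.Finite → O2.Nonempty → O2 ⊆ V →
      C O2 ⊆ O1 → O ⊆ O2 \ O1 → C (O2 \ O) ⊆ O1) ∧
  -- C4a
  (∀ l : ℝ, 0 < l → ∀ O1 O2 : Set W, O1.Finite → O1.Nonempty → O1 ⊆ V →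
      O2.Finite → O2.Nonempty → O2 ⊆ V →
      O1 ⊆ C O2 → (fun v => l • v) '' O1 ⊆ C ((fun v => l • v) '' O2)) ∧
  -- C4b
  (∀ u : W, u ∈ V → ∀ O1 O2 : Set W, O1.Finite → O1.Nonempty → O1 ⊆ V →
      O2.Finite → O2.Nonempty → O2 ⊆ V →
      O1 ⊆ C O2 → (fun v => v + u) '' O1 ⊆ C ((fun v => v + u) '' O2))
/-- Coherence of a set of desirable gambles `D` inside the linear space (carrier) `V`:
`0 ∉ D`; every nonzero nonnegative gamble of `V` belongs to `D`; `D` is closed under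
multiplication by positive reals and under addition. -/
def CohDesOn {α : Type*} (V : Set (α → ℝ)) (D : Set (α → ℝ)) : Prop :=
  (0 : α → ℝ) ∉ D ∧
  (∀ f ∈ V, (∀ x, 0 ≤ f x) → f ≠ 0 → f ∈ D) ∧
  (∀ f ∈ D, ∀ l : ℝ, 0 < l → l • f ∈ D) ∧
  (∀ f ∈ D, ∀ g ∈ D, f + g ∈ D)

/-- A choice function `C` (with option sets the nonempty finite subsets of the carrier `V`)
is compatible with a set `I` of indifferent gambles if for every `f ∈ I` and every nonempty
finite option set `O ⊆ V` with `{0, f} ⊆ O`: `0 ∈ C(O) ⟺ f ∈ C(O)`. -/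
def Compat {W : Type*} [AddCommGroup W] [Module ℝ W] (V : Set W) (I : Set W)
    (C : Set W → Set W) : Prop :=
  ∀ f ∈ I, ∀ O : Set W, O.Finite → O.Nonempty → O ⊆ V → (0 : W) ∈ O → f ∈ O →
    ((0 : W) ∈ C O ↔ f ∈ C O)

lemma dependsOn_mono {X : Type*} {m n : ℕ} (h : m ≤ n) {f : (ℕ → X) → ℝ}
    (hf : DependsOn m f) : DependsOn n f :=
  fun x y hxy => hf x y fun k hk => hxy k (lt_of_lt_of_le hk h)

/-- `L(X^n)` as a submodule. -/
def LnSub (X : Type*) (n : ℕ) : Submodule ℝ ((ℕ → X) → ℝ) where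
  carrier := Ln X n
  add_mem' := fun hf hg x y h => by
    simp only [Pi.add_apply, hf x y h, hg x y h]
  zero_mem' := fun x y _ => rfl
  smul_mem' := fun c f hf x y h => by
    simp only [Pi.smul_apply, hf x y h]

lemma liftSeq_dependsOn {X : Type*} {n : ℕ} (σ : Equiv.Perm (Fin n))
    {f : (ℕ → X) → ℝ} (hf : DependsOn n f) : DependsOn n (liftSeq n σ f) := by
  intro x y hxy
  apply hf
  intro k hk
  simp only [dif_pos hk]
  exact hxy _ (σ ⟨k, hk⟩).2

lemma InSub_le_LnSub (X : Type*) (n : ℕ) : InSub X n ≤ LnSub X n := by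
  apply Submodule.span_le.2
  rintro g ⟨f, hf, σ, rfl⟩
  exact Submodule.sub_mem _ hf (liftSeq_dependsOn σ hf)

/-- Embedding of `Fin m` into the initial segment of `Fin n`. -/
def eFin {m n : ℕ} (h : m ≤ n) : Fin m ≃ {k : Fin n // (k : ℕ) < m} where
  toFun i := ⟨⟨i, lt_of_lt_of_le i.2 h⟩, i.2⟩
  invFun k := ⟨(k : Fin n), k.2⟩
  left_inv i := rfl
  right_inv k := rfl

lemma InSub_mono (X : Type*) {m n : ℕ} (h : m ≤ n) : InSub X m ≤ InSub X n := by
  apply Submodule.span_le.2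
  rintro g ⟨f, hf, σ, rfl⟩
  apply Submodule.subset_span
  refine ⟨f, dependsOn_mono h hf, σ.extendDomain (eFin h), ?_⟩
  have : liftSeq m σ f = liftSeq n (σ.extendDomain (eFin h)) f := by
    funext x
    simp only [liftSeq]
    congr 1
    funext k
    by_cases hk : k < m
    · have hkn : k < n := lt_of_lt_of_le hk h
      rw [dif_pos hk, dif_pos hkn]
      rw [Equiv.Perm.extendDomain_apply_subtype σ (eFin h) (hk : ((⟨k, hkn⟩ : Fin n) : ℕ) < m)]
      rfl
    · by_cases hkn : k < n
      · rw [dif_neg hk, dif_pos hkn]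
        rw [Equiv.Perm.extendDomain_apply_not_subtype σ (eFin h)
          (hk : ¬ ((⟨k, hkn⟩ : Fin n) : ℕ) < m)]
      · rw [dif_neg hk, dif_neg hkn]
  rw [this]

lemma exists_bound {X : Type*} (O : Set ((ℕ → X) → ℝ)) (hO : O.Finite) :
    O ⊆ Lfin X → ∃ N, ∀ g ∈ O, DependsOn N g := by
  refine Set.Finite.induction_on (motive := fun s _ => s ⊆ Lfin X → ∃ N, ∀ g ∈ s, DependsOn N g) O hO (fun _ => ⟨0, fun g hg => absurd hg (Set.notMem_empty g)⟩) ?_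
  intro a s _ _ ih hsub
  obtain ⟨N1, hN1⟩ := ih fun g hg => hsub (Set.mem_insert_of_mem a hg)
  obtain ⟨N2, hN2⟩ := hsub (Set.mem_insert a s)
  refine ⟨max N1 N2, fun g hg => ?_⟩
  rcases hg with rfl | hg
  · exact dependsOn_mono (le_max_right _ _) hN2
  · exact dependsOn_mono (le_max_left _ _) (hN1 g hg)

lemma Ln_subset_Lfin (X : Type*) (n : ℕ) : Ln X n ⊆ Lfin X :=
  fun _ hg => ⟨n, hg⟩


/-- a coherent choice function `C` on `L_fin` is exchangeable (compatible
with `I_P = ⋃_n I_n`) iff for every `n` its `X^n`-marginal `C_n` is exchangeable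
(compatible with `I_n`); similarly, a coherent set of desirable gambles `D ⊆ L_fin`
satisfies `D + I_P ⊆ D` iff for every `n` its marginal `D_n = D ∩ L(X^n)` satisfies
`D_n + I_n ⊆ D_n`. -/
theorem statement_18 (X : Type*) [Fintype X] [Nonempty X] :
    (∀ C : Set ((ℕ → X) → ℝ) → Set ((ℕ → X) → ℝ), (∀ O, C O ⊆ O) →
      CoherentCF (Lfin X) ltPt C →
      (Compat (Lfin X) (IP X) C ↔
        ∀ n : ℕ, Compat (Ln X n) (InSub X n : Set ((ℕ → X) → ℝ)) C)) ∧
    (∀ D : Set ((ℕ → X) → ℝ), D ⊆ Lfin X → CohDesOn (Lfin X) D →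
      ((∀ f ∈ D, ∀ h ∈ IP X, f + h ∈ D) ↔
        ∀ n : ℕ, ∀ f ∈ D ∩ Ln X n, ∀ h ∈ (InSub X n : Set ((ℕ → X) → ℝ)),
          f + h ∈ D ∩ Ln X n)) := by
  constructor
  · intro C _hsub hcoh
    constructor
    · intro hcomp n f hf O hfin hne hOsub h0 hfO
      exact hcomp f (Set.mem_iUnion.2 ⟨n, hf⟩) O hfin hne
        (hOsub.trans (Ln_subset_Lfin X n)) h0 hfO
    · intro hcomp f hf O hfin hne hOsub h0 hfO
      simp only [IP, Set.mem_iUnion] at hf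
      obtain ⟨n, hfn⟩ := hf
      obtain ⟨N0, hN0⟩ := exists_bound O hfin hOsub
      refine hcomp (max n N0) f (InSub_mono X (le_max_left _ _) hfn) O hfin hne
        (fun g hg => dependsOn_mono (le_max_right _ _) (hN0 g hg)) h0 hfO
  · intro D hDsub _hcoh
    constructor
    · intro hcl n f hf h hh
      refine ⟨hcl f hf.1 h (Set.mem_iUnion.2 ⟨n, hh⟩), ?_⟩
      exact (LnSub X n).add_mem hf.2 (InSub_le_LnSub X n hh)
    · intro hcl f hf h hh
      simp only [IP, Set.mem_iUnion] at hh
      obtain ⟨n, hhn⟩ := hh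
      obtain ⟨m, hm⟩ := hDsub hf
      exact (hcl (max m n) f ⟨hf, dependsOn_mono (le_max_left _ _) hm⟩ h
        (InSub_mono X (le_max_right _ _) hhn)).1

end ExchPaper
end
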